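/- arXiv:2504.17176 — 2 statements merged into one kernel-verified Lean document; each statement's English description precedes it below -/
import Mathlib

section
/- Suppose additionally that a e^{Sx} s ≥ 0 for every x ≥ 0 and ∫_0^∞ a e^{Sx} s dx = 1. Then the folded kernel k(w) := a (e^{S(Δ−w)} + e^{S(Δ+w)}) (I − e^{2ΔS})^{−1} s satisfies k(w) ≥ 0 for all w ∈ [0,Δ] and ∫_0^Δ k(w) dw = 1; consequently, for every bounded measurable g : [0,Δ] → ℝ, |∫_0^Δ k(w) g(w) dw| ≤ sup_{w∈[0,Δ]} |g(w)|. -/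
/-!
Write `f x = a e^{xS} s` and `A = e^{2ΔS}`. Since `A ^ n = e^{2nΔS} → 0`, the matrix `1 - A` is
invertible with inverse the Neumann series `∑ Aⁿ`, so
`k w = ∑ₙ (f (Δ - w + 2nΔ) + f (Δ + w + 2nΔ))` is a sum of values of the nonnegative density `f`.
For the mass, the substitutions `x = Δ ∓ w` turn `∫₀^Δ k` into `∫₀^{2Δ} a e^{xS} v` with
`v = (1 - A)⁻¹ s`, and the shift `x ↦ x + 2Δ` gives
`∫₀^{2Δ} a e^{xS} v = ∫₀^∞ a e^{xS} (1 - A) v = ∫₀^∞ f = 1`.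
A nonnegative kernel of mass one then averages `g`, whence the bound by `sup |g|`.
-/

open MeasureTheory Matrix

attribute [local instance] Matrix.normedAddCommGroup Matrix.normedSpace

/-- `e^{xS}` : the matrix exponential of `x • S`. -/
noncomputable def mexp {p : ℕ} (S : Matrix (Fin p) (Fin p) ℝ) (x : ℝ) :
    Matrix (Fin p) (Fin p) ℝ := NormedSpace.exp (x • S)

/-- The folded kernel `k(w) = a (e^{S(Δ-w)} + e^{S(Δ+w)}) (I - e^{2ΔS})⁻¹ s`. -/
noncomputable def foldedKernel {p : ℕ} (S : Matrix (Fin p) (Fin p) ℝ)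
    (a s : Fin p → ℝ) (Δ w : ℝ) : ℝ :=
  (a ᵥ* (mexp S (Δ - w) + mexp S (Δ + w)) ᵥ* (1 - mexp S (2 * Δ))⁻¹) ⬝ᵥ s

open Filter Set Topology

namespace Matrix

variable {n K : Type*} [Fintype n] [DecidableEq n] [Field K] [TopologicalSpace K]
  [IsTopologicalRing K] [T1Space K] {A : Matrix n n K}

theorem isUnit_one_sub_of_tendsto_pow (hA : Tendsto (A ^ ·) atTop (𝓝 0)) : IsUnit (1 - A) := by
  have hdet : Tendsto (fun N : ℕ => (1 - A ^ N).det) atTop (𝓝 1) := by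
    have hcont : Continuous fun B : Matrix n n K => (1 - B).det := by fun_prop
    convert (hcont.tendsto 0).comp hA using 2 <;> simp
  obtain ⟨N, hN⟩ := (hdet.eventually_ne one_ne_zero).exists
  rw [isUnit_iff_isUnit_det, isUnit_iff_ne_zero]
  intro h
  rw [← mul_neg_geom_sum, det_mul, h, zero_mul] at hN
  exact hN rfl

theorem tendsto_geom_sum_nonsing_inv (hA : Tendsto (A ^ ·) atTop (𝓝 0)) :
    Tendsto (fun N => ∑ i ∈ Finset.range N, A ^ i) atTop (𝓝 (1 - A)⁻¹) := by
  have hunit := (isUnit_iff_isUnit_det _).1 (isUnit_one_sub_of_tendsto_pow hA)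
  have hsum (N : ℕ) : ∑ i ∈ Finset.range N, A ^ i = (1 - A)⁻¹ * (1 - A ^ N) := by
    rw [← mul_neg_geom_sum, ← mul_assoc, nonsing_inv_mul _ hunit, one_mul]
  simpa [hsum] using ((tendsto_const_nhds (x := (1 : Matrix n n K))).sub hA).const_mul (1 - A)⁻¹

end Matrix

theorem intervalIntegral.integral_comp_sub_left_add_comp_add_left {E : Type*}
    [NormedAddCommGroup E] [NormedSpace ℝ E] {f : ℝ → E} (hf : Continuous f) (c : ℝ) :
    ∫ x in 0..c, (f (c - x) + f (c + x)) = ∫ x in 0..2 * c, f x := by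
  rw [intervalIntegral.integral_add (Continuous.intervalIntegrable (by fun_prop) _ _)
    (Continuous.intervalIntegrable (by fun_prop) _ _),
    intervalIntegral.integral_comp_sub_left, intervalIntegral.integral_comp_add_left, sub_self,
    sub_zero, add_zero, two_mul, intervalIntegral.integral_add_adjacent_intervals] <;>
  exact hf.intervalIntegrable _ _

theorem MeasureTheory.setIntegral_Ici_comp_add_right {E : Type*} [NormedAddCommGroup E]
    [NormedSpace ℝ E] (f : ℝ → E) (a d : ℝ) :
    ∫ x in Ici a, f (x + d) = ∫ x in Ici (a + d), f x := by
  have := (measurePreserving_add_right volume d).setIntegral_preimage_emb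
    (measurableEmbedding_addRight d) f (Ici (a + d))
  rwa [preimage_add_const_Ici, add_sub_cancel_right] at this

theorem MeasureTheory.abs_setIntegral_mul_le_mul_iSup {α : Type*} [MeasurableSpace α]
    {μ : Measure α} {s : Set α} (hs : MeasurableSet s) {f g : α → ℝ} (hf : IntegrableOn f s μ)
    (hf₀ : ∀ x ∈ s, 0 ≤ f x) (hg : BddAbove (range fun x : s => |g x|)) :
    |∫ x in s, f x * g x ∂μ| ≤ (∫ x in s, f x ∂μ) * ⨆ x : s, |g x| := by
  rw [← integral_mul_const, ← Real.norm_eq_abs]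
  refine norm_integral_le_of_norm_le (hf.mul_const _) ((ae_restrict_iff' hs).2 ?_)
  refine Eventually.of_forall fun x hx => ?_
  rw [Real.norm_eq_abs, abs_mul, abs_of_nonneg (hf₀ x hx)]
  exact mul_le_mul_of_nonneg_left (le_ciSup hg ⟨x, hx⟩) (hf₀ x hx)

section mexp

variable {p : ℕ} (S : Matrix (Fin p) (Fin p) ℝ)

theorem mexp_add (x y : ℝ) : mexp S (x + y) = mexp S x * mexp S y := by
  rw [mexp, mexp, mexp, add_smul]
  exact Matrix.exp_add_of_commute _ _ (((Commute.refl S).smul_left x).smul_right y)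

theorem mexp_natCast_mul (n : ℕ) (x : ℝ) : mexp S (n * x) = mexp S x ^ n := by
  rw [mexp, mexp, ← Matrix.exp_nsmul, mul_smul, Nat.cast_smul_eq_nsmul]

@[fun_prop]
theorem continuous_mexp : Continuous (mexp S) := by
  -- the `L∞` operator norm makes matrices a complete normed algebra inducing their usual topology
  let _ : NormedRing (Matrix (Fin p) (Fin p) ℝ) := Matrix.linftyOpNormedRing
  let _ : NormedAlgebra ℝ (Matrix (Fin p) (Fin p) ℝ) := Matrix.linftyOpNormedAlgebra
  let _ : NormedAlgebra ℚ (Matrix (Fin p) (Fin p) ℝ) := .restrictScalars ℚ ℝ _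
  exact (@NormedSpace.exp_continuous (Matrix (Fin p) (Fin p) ℝ) _ _
    (inferInstanceAs (CompleteSpace (Fin p → Fin p → ℝ)))).comp
    (continuous_id.smul continuous_const)

theorem tendsto_mexp_pow (hS : Tendsto (mexp S) atTop (𝓝 0)) {T : ℝ} (hT : 0 < T) :
    Tendsto (mexp S T ^ ·) atTop (𝓝 0) := by
  simp_rw [← mexp_natCast_mul]
  exact hS.comp (tendsto_natCast_atTop_atTop.atTop_mul_const hT)

theorem integrableOn_vecMul_mexp_dotProduct
    (hS : IntegrableOn (fun x => ‖mexp S x‖) (Ici 0)) (u v : Fin p → ℝ) :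
    IntegrableOn (fun x => (u ᵥ* mexp S x) ⬝ᵥ v) (Ici 0) := by
  have hentry (i j : Fin p) : IntegrableOn (fun x => mexp S x i j) (Ici 0) :=
    hS.mono' ((continuous_mexp S).matrix_elem i j).aestronglyMeasurable
      (Eventually.of_forall fun x => norm_entry_le_entrywise_sup_norm (mexp S x))
  simp only [dotProduct, vecMul]
  exact integrable_finsetSum _ fun j _ =>
    (integrable_finsetSum _ fun i _ => (hentry i j).const_mul (u i)).mul_const (v j)

theorem integral_vecMul_mexp_dotProduct_eq_integral_Ici
    (hS : IntegrableOn (fun x => ‖mexp S x‖) (Ici 0)) (u v : Fin p → ℝ) {T : ℝ} (hT : 0 ≤ T) :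
    ∫ x in 0..T, (u ᵥ* mexp S x) ⬝ᵥ v =
      ∫ x in Ici 0, (u ᵥ* mexp S x) ⬝ᵥ ((1 - mexp S T) *ᵥ v) := by
  have hint := integrableOn_vecMul_mexp_dotProduct S hS u
  have hshift : ∫ x in Ici T, (u ᵥ* mexp S x) ⬝ᵥ v
      = ∫ x in Ici 0, (u ᵥ* mexp S x) ⬝ᵥ (mexp S T *ᵥ v) := by
    have := setIntegral_Ici_comp_add_right (fun x => (u ᵥ* mexp S x) ⬝ᵥ v) 0 T
    rw [zero_add] at this
    rw [← this]
    refine setIntegral_congr_fun measurableSet_Ici fun x _ => ?_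
    rw [mexp_add, ← vecMul_vecMul, dotProduct_mulVec]
  simp_rw [sub_mulVec, one_mulVec, dotProduct_sub]
  rw [integral_sub (hint v) (hint _), ← hshift]
  exact (intervalIntegral.integral_Ici_sub_Ici' (hint v)
    ((hint v).mono_set (Ici_subset_Ici.2 hT))).symm

end mexp

section foldedKernel

variable {p : ℕ} {S : Matrix (Fin p) (Fin p) ℝ} (a s : Fin p → ℝ) {Δ : ℝ}

theorem foldedKernel_eq_add (w : ℝ) :
    foldedKernel S a s Δ w =
      (a ᵥ* mexp S (Δ - w)) ⬝ᵥ ((1 - mexp S (2 * Δ))⁻¹ *ᵥ s) +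
      (a ᵥ* mexp S (Δ + w)) ⬝ᵥ ((1 - mexp S (2 * Δ))⁻¹ *ᵥ s) := by
  rw [foldedKernel, ← dotProduct_mulVec, vecMul_add, add_dotProduct]

theorem continuous_foldedKernel : Continuous (foldedKernel S a s Δ) := by
  simp_rw [funext (foldedKernel_eq_add a s)]
  fun_prop

theorem tendsto_sum_foldedKernel (hS : Tendsto (mexp S) atTop (𝓝 0)) (hΔ : 0 < Δ) (w : ℝ) :
    Tendsto (fun N : ℕ => ∑ i ∈ Finset.range N,
      ((a ᵥ* mexp S (Δ - w + i * (2 * Δ))) ⬝ᵥ s + (a ᵥ* mexp S (Δ + w + i * (2 * Δ))) ⬝ᵥ s))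
      atTop (𝓝 (foldedKernel S a s Δ w)) := by
  have hcont : Continuous fun B =>
      (a ᵥ* ((mexp S (Δ - w) + mexp S (Δ + w)) * B)) ⬝ᵥ s := by fun_prop
  convert (hcont.tendsto _).comp
    (tendsto_geom_sum_nonsing_inv (tendsto_mexp_pow S hS (by positivity : 0 < 2 * Δ))) using 1
  · ext N
    simp only [Function.comp_apply, Finset.mul_sum, vecMul_sum, sum_dotProduct]
    refine Finset.sum_congr rfl fun i _ => ?_
    rw [← mexp_natCast_mul, add_mul, ← mexp_add, ← mexp_add, vecMul_add, add_dotProduct]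
  · rw [foldedKernel, vecMul_vecMul]

theorem foldedKernel_nonneg (hS : Tendsto (mexp S) atTop (𝓝 0)) (hΔ : 0 < Δ)
    (hnn : ∀ x, 0 ≤ x → 0 ≤ (a ᵥ* mexp S x) ⬝ᵥ s) {w : ℝ} (hw : w ∈ Icc 0 Δ) :
    0 ≤ foldedKernel S a s Δ w :=
  ge_of_tendsto' (tendsto_sum_foldedKernel a s hS hΔ w) fun N =>
    Finset.sum_nonneg fun i _ => add_nonneg
      (hnn _ (add_nonneg (sub_nonneg.2 hw.2) (by positivity)))
      (hnn _ (add_nonneg (by linarith [hw.1]) (by positivity)))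

theorem integral_foldedKernel (hS : Tendsto (mexp S) atTop (𝓝 0))
    (hSint : IntegrableOn (fun x => ‖mexp S x‖) (Ici 0)) (hΔ : 0 < Δ) :
    ∫ w in Icc 0 Δ, foldedKernel S a s Δ w = ∫ x in Ici 0, (a ᵥ* mexp S x) ⬝ᵥ s := by
  have hunit : IsUnit (1 - mexp S (2 * Δ)).det := (isUnit_iff_isUnit_det _).1
    (isUnit_one_sub_of_tendsto_pow (tendsto_mexp_pow S hS (by positivity)))
  calc ∫ w in Icc 0 Δ, foldedKernel S a s Δ w
      = ∫ x in 0..2 * Δ, (a ᵥ* mexp S x) ⬝ᵥ ((1 - mexp S (2 * Δ))⁻¹ *ᵥ s) := by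
        rw [integral_Icc_eq_integral_Ioc, ← intervalIntegral.integral_of_le hΔ.le,
          ← intervalIntegral.integral_comp_sub_left_add_comp_add_left
            (by fun_prop)]
        simp_rw [foldedKernel_eq_add]
    _ = ∫ x in Ici 0, (a ᵥ* mexp S x) ⬝ᵥ s := by
        rw [integral_vecMul_mexp_dotProduct_eq_integral_Ici S hSint _ _ (by positivity),
          mulVec_mulVec, mul_nonsing_inv _ hunit, one_mulVec]

end foldedKernel

theorem folded_kernel_is_density_general
    (p : ℕ) (S : Matrix (Fin p) (Fin p) ℝ)
    (hS0 : Filter.Tendsto (fun x : ℝ => mexp S x) Filter.atTop (nhds 0))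
    (hSint : IntegrableOn (fun x : ℝ => ‖mexp S x‖) (Set.Ici 0))
    (a s : Fin p → ℝ) (Δ : ℝ) (hΔ : 0 < Δ)
    (hnn : ∀ x : ℝ, 0 ≤ x → 0 ≤ (a ᵥ* mexp S x) ⬝ᵥ s)
    (hone : (∫ x in Set.Ici (0 : ℝ), (a ᵥ* mexp S x) ⬝ᵥ s) = 1) :
    (∀ w ∈ Set.Icc (0 : ℝ) Δ, 0 ≤ foldedKernel S a s Δ w)
    ∧ (∫ w in Set.Icc (0 : ℝ) Δ, foldedKernel S a s Δ w) = 1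
    ∧ ∀ g : ℝ → ℝ, Measurable g → (∃ C : ℝ, ∀ w ∈ Set.Icc (0 : ℝ) Δ, |g w| ≤ C) →
        |∫ w in Set.Icc (0 : ℝ) Δ, foldedKernel S a s Δ w * g w|
          ≤ ⨆ w : Set.Icc (0 : ℝ) Δ, |g (w : ℝ)| := by
  have hpos : ∀ w ∈ Icc 0 Δ, 0 ≤ foldedKernel S a s Δ w :=
    fun w => foldedKernel_nonneg a s hS0 hΔ hnn
  have hmass : ∫ w in Icc 0 Δ, foldedKernel S a s Δ w = 1 :=
    (integral_foldedKernel a s hS0 hSint hΔ).trans hone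
  refine ⟨hpos, hmass, fun g _ ⟨C, hC⟩ => ?_⟩
  have hg : BddAbove (range fun w : Icc 0 Δ => |g w|) :=
    ⟨C, forall_mem_range.2 fun w => hC w w.2⟩
  simpa [hmass] using abs_setIntegral_mul_le_mul_iSup measurableSet_Icc
    ((continuous_foldedKernel a s).integrableOn_Icc (μ := volume)) hpos hg

/-- if `x ↦ a e^{Sx} s` is a probability density on `[0,∞)`, then the
folded kernel is a probability density on `[0,Δ]`, hence integrating a bounded
measurable `g` against it is bounded by `sup |g|`. -/
theorem folded_kernel_is_density
    (p : ℕ) (hp : 1 ≤ p) (S : Matrix (Fin p) (Fin p) ℝ)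
    (hS0 : Filter.Tendsto (fun x : ℝ => mexp S x) Filter.atTop (nhds 0))
    (hSint : IntegrableOn (fun x : ℝ => ‖mexp S x‖) (Set.Ici 0))
    (a s : Fin p → ℝ) (Δ : ℝ) (hΔ : 0 < Δ)
    (hnn : ∀ x : ℝ, 0 ≤ x → 0 ≤ (a ᵥ* mexp S x) ⬝ᵥ s)
    (hone : (∫ x in Set.Ici (0 : ℝ), (a ᵥ* mexp S x) ⬝ᵥ s) = 1) :
    (∀ w ∈ Set.Icc (0 : ℝ) Δ, 0 ≤ foldedKernel S a s Δ w)
    ∧ (∫ w in Set.Icc (0 : ℝ) Δ, foldedKernel S a s Δ w) = 1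
    ∧ ∀ g : ℝ → ℝ, Measurable g → (∃ C : ℝ, ∀ w ∈ Set.Icc (0 : ℝ) Δ, |g w| ≤ C) →
        |∫ w in Set.Icc (0 : ℝ) Δ, foldedKernel S a s Δ w * g w|
          ≤ ⨆ w : Set.Icc (0 : ℝ) Δ, |g (w : ℝ)| :=
  folded_kernel_is_density_general p S hS0 hSint a s Δ hΔ hnn hone
end

section
/- (Appendix window estimate.) Let ε > 0 with v < ε², let t satisfy 2ε ≤ t ≤ Δ − ε, and let g : [0,Δ] → ℝ be bounded with |g| ≤ G and Lipschitz with constant L. Then ℙ(Z ≥ t) ≥ 1 − v/ε² > 0 and | 𝔼[ g(Z − t) · 1{0 ≤ Z − t ≤ Δ − ε} ] / ℙ(Z ≥ t) − g(Δ − t) | ≤ 2G (v/ε²)/(1 − v/ε²) + Lε. -/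
open MeasureTheory ProbabilityTheory

/-!
Chebyshev's inequality puts mass at least `1 - v/ε²` on the event `|Z - Δ| < ε`, which lies
inside `{t ≤ Z}` and, because `2ε ≤ t`, inside the window `{0 ≤ Z - t ≤ Δ - ε}`. On that event
`g(Z - t)` is within `Lε` of `g(Δ - t)` by the Lipschitz bound; on the rest of `{t ≤ Z}`, of
probability at most `v/ε²`, the two differ by at most `2G`. Dividing by `ℙ(Z ≥ t) ≥ 1 - v/ε²`
gives the estimate.
-/

section General

variable {Ω : Type*} [MeasurableSpace Ω] {μ : Measure Ω}

lemma setIntegral_indicator_sub_const [IsFiniteMeasure μ] {A S : Set Ω} (hA : MeasurableSet A)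
    (hAS : A ⊆ S) {h : Ω → ℝ} (hh : IntegrableOn h A μ) (c : ℝ) :
    ∫ ω in S, (A.indicator h ω - c) ∂μ = ∫ ω in A, h ω ∂μ - c * μ.real S := by
  rw [integral_sub (hh.integrable_indicator hA).integrableOn (integrableOn_const),
    setIntegral_indicator hA, Set.inter_eq_right.mpr hAS, setIntegral_const, smul_eq_mul,
    mul_comm]

lemma abs_setIntegral_le_of_abs_le_off [IsFiniteMeasure μ] {f : Ω → ℝ} {S B : Set Ω}
    (hB : MeasurableSet B) (hf : IntegrableOn f S μ) {δ M : ℝ} (hδ : 0 ≤ δ) (hM : 0 ≤ M)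
    (hfM : ∀ ω ∈ S, |f ω| ≤ M) (hfδ : ∀ ω ∈ S, ω ∉ B → |f ω| ≤ δ) :
    |∫ ω in S, f ω ∂μ| ≤ δ * μ.real S + M * μ.real B := by
  rw [← integral_inter_add_sdiff hB hf]
  have hbad : ‖∫ ω in S ∩ B, f ω ∂μ‖ ≤ M * μ.real (S ∩ B) :=
    norm_setIntegral_le_of_norm_le_const (measure_lt_top _ _) fun ω (hω : ω ∈ S ∩ B) ↦ hfM ω hω.1
  have hgood : ‖∫ ω in S \ B, f ω ∂μ‖ ≤ δ * μ.real (S \ B) :=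
    norm_setIntegral_le_of_norm_le_const (measure_lt_top _ _)
      fun ω (hω : ω ∈ S \ B) ↦ hfδ ω hω.1 hω.2
  calc |∫ ω in S ∩ B, f ω ∂μ + ∫ ω in S \ B, f ω ∂μ|
      ≤ M * μ.real (S ∩ B) + δ * μ.real (S \ B) := (abs_add_le _ _).trans (add_le_add hbad hgood)
    _ ≤ M * μ.real B + δ * μ.real S :=
      add_le_add (mul_le_mul_of_nonneg_left (measureReal_mono Set.inter_subset_right) hM)
        (mul_le_mul_of_nonneg_left (measureReal_mono Set.sdiff_subset) hδ)
    _ = δ * μ.real S + M * μ.real B := add_comm _ _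

lemma measureReal_abs_sub_ge_le_variance_div_sq [IsFiniteMeasure μ] {X : Ω → ℝ}
    (hX : MemLp X 2 μ) {c : ℝ} (hc : 0 < c) :
    μ.real {ω | c ≤ |X ω - μ[X]|} ≤ variance X μ / c ^ 2 :=
  ENNReal.toReal_le_of_le_ofReal (by positivity [variance_nonneg X μ])
    (meas_ge_le_variance_div_sq hX hc)

lemma one_sub_variance_div_sq_le_measureReal [IsProbabilityMeasure μ] {X : Ω → ℝ}
    (hX : MemLp X 2 μ) {c t : ℝ} (hc : 0 < c) (ht : t ≤ μ[X] - c) :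
    1 - variance X μ / c ^ 2 ≤ μ.real {ω | t ≤ X ω} := by
  have hsub : {ω | t ≤ X ω}ᶜ ⊆ {ω | c ≤ |X ω - μ[X]|} := fun ω hω ↦ by
    simp only [Set.mem_compl_iff, Set.mem_ofPred_eq, not_le] at hω ⊢
    rw [abs_sub_comm, abs_of_pos (by linarith)]
    linarith
  have := (measureReal_mono hsub).trans (measureReal_abs_sub_ge_le_variance_div_sq hX hc)
  rw [probReal_compl_eq_one_sub₀ (aestronglyMeasurable_const.nullMeasurableSet_le hX.1)] at this
  linarith

end General

lemma abs_indicator_sub_le_two_mul {α : Type*} {g : α → ℝ} {s I : Set α} {G : ℝ}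
    (hG : ∀ x ∈ I, |g x| ≤ G) (hsI : s ⊆ I) {y : α} (hy : y ∈ I) (x : α) :
    |s.indicator g x - g y| ≤ 2 * G := by
  have hG0 : 0 ≤ G := (abs_nonneg _).trans (hG y hy)
  calc |s.indicator g x - g y| ≤ |s.indicator g x| + |g y| := abs_sub _ _
    _ ≤ G + G := by
      gcongr
      · by_cases hx : x ∈ s
        · simpa [hx] using hG x (hsI hx)
        · simpa [hx] using hG0
      · exact hG y hy
    _ = 2 * G := by ring

lemma abs_window_indicator_sub_le {g : ℝ → ℝ} {Δ ε t L z : ℝ}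
    (hL : ∀ x ∈ Set.Icc (0 : ℝ) Δ, ∀ x' ∈ Set.Icc (0 : ℝ) Δ, |g x - g x'| ≤ L * |x - x'|)
    (hL0 : 0 ≤ L) (ht1 : 2 * ε ≤ t) (ht2 : t ≤ Δ - ε) (hzΔ : |z - Δ| < ε) :
    |(Set.Icc 0 (Δ - ε)).indicator g (z - t) - g (Δ - t)| ≤ L * ε := by
  have hε : 0 < ε := (abs_nonneg _).trans_lt hzΔ
  obtain ⟨hz₁, hz₂⟩ := abs_lt.mp hzΔ
  have hwin : z - t ∈ Set.Icc 0 (Δ - ε) := ⟨by linarith, by linarith⟩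
  rw [Set.indicator_of_mem hwin]
  calc |g (z - t) - g (Δ - t)| ≤ L * |z - t - (Δ - t)| :=
        hL _ ⟨by linarith, by linarith⟩ _ ⟨by linarith, by linarith⟩
    _ = L * |z - Δ| := by rw [sub_sub_sub_cancel_right]
    _ ≤ L * ε := by gcongr

lemma abs_setIntegral_window_sub_le {Ω : Type*} [MeasurableSpace Ω] {μ : Measure Ω}
    [IsFiniteMeasure μ] {Z : Ω → ℝ} (hZ : Measurable Z) {g : ℝ → ℝ} (hg : Measurable g)
    {Δ ε t G L : ℝ} (hG : ∀ x ∈ Set.Icc (0 : ℝ) Δ, |g x| ≤ G)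
    (hL : ∀ x ∈ Set.Icc (0 : ℝ) Δ, ∀ x' ∈ Set.Icc (0 : ℝ) Δ, |g x - g x'| ≤ L * |x - x'|)
    (hε : 0 < ε) (ht1 : 2 * ε ≤ t) (ht2 : t ≤ Δ - ε) :
    |∫ ω in {ω | 0 ≤ Z ω - t ∧ Z ω - t ≤ Δ - ε}, g (Z ω - t) ∂μ
        - g (Δ - t) * μ.real {ω | t ≤ Z ω}|
      ≤ L * ε * μ.real {ω | t ≤ Z ω} + 2 * G * μ.real {ω | ε ≤ |Z ω - Δ|} := by
  set A := {ω | 0 ≤ Z ω - t ∧ Z ω - t ≤ Δ - ε}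
  have hΔt : Δ - t ∈ Set.Icc 0 Δ := ⟨by linarith, by linarith⟩
  have hG0 : 0 ≤ G := (abs_nonneg _).trans (hG _ hΔt)
  have hL0 : 0 ≤ L := nonneg_of_mul_nonneg_left
    ((abs_nonneg _).trans (hL 0 ⟨le_rfl, by linarith⟩ Δ ⟨by linarith, le_rfl⟩))
    (abs_pos_of_neg (by linarith))
  have hA : MeasurableSet A := measurableSet_Icc.preimage (hZ.sub_const t)
  have hint : IntegrableOn (fun ω ↦ g (Z ω - t)) A μ :=
    .of_bound (measure_lt_top _ _) (hg.comp (hZ.sub_const t)).aestronglyMeasurable G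
      (ae_restrict_of_forall_mem hA fun ω hω ↦ hG _ ⟨hω.1, by linarith [hω.2]⟩)
  rw [← setIntegral_indicator_sub_const (S := {ω | t ≤ Z ω}) hA
    (fun ω hω ↦ sub_nonneg.1 hω.1) hint]
  refine abs_setIntegral_le_of_abs_le_off (δ := L * ε) (M := 2 * G)
    (measurableSet_le measurable_const (hZ.sub_const Δ).abs)
    ((hint.integrable_indicator hA).sub (integrable_const _)).integrableOn
    (by positivity) (by positivity) (fun ω _ ↦ ?_) (fun ω _ hω ↦ ?_)
  -- `A` is the preimage of `Icc 0 (Δ - ε)` under `Z - t`, so both indicators agree definitionally.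
  · exact abs_indicator_sub_le_two_mul hG (Set.Icc_subset_Icc le_rfl (by linarith)) hΔt (Z ω - t)
  · exact abs_window_indicator_sub_le hL hL0 ht1 ht2 (by simpa using hω)

lemma abs_div_sub_le_of_abs_sub_mul_le {I c p q a b : ℝ} (hq0 : 0 ≤ q) (hq1 : q < 1)
    (hp : 1 - q ≤ p) (hb : 0 ≤ b) (h : |I - c * p| ≤ a * p + b * q) :
    |I / p - c| ≤ b * q / (1 - q) + a := by
  have hp0 : 0 < p := by linarith
  calc |I / p - c| = |I - c * p| / p := by
        rw [← abs_of_pos hp0, ← abs_div, abs_of_pos hp0, sub_div, mul_div_cancel_right₀ _ hp0.ne']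
    _ ≤ (a * p + b * q) / p := by gcongr
    _ = b * q / p + a := by field_simp; ring
    _ ≤ b * q / (1 - q) + a := by gcongr

theorem window_estimate_general
    {Ω : Type*} [MeasureSpace Ω] [IsProbabilityMeasure (ℙ : Measure Ω)]
    (Z : Ω → ℝ) (hZmeas : Measurable Z)
    (hZsq : Integrable (fun ω => (Z ω) ^ 2))
    (Δ v : ℝ) (hΔ : Δ = ∫ ω, Z ω)
    (hv : v = variance Z ℙ)
    (ε t : ℝ) (hε : 0 < ε) (hvε : v < ε ^ 2) (ht1 : 2 * ε ≤ t) (ht2 : t ≤ Δ - ε)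
    (g : ℝ → ℝ) (hgmeas : Measurable g)
    (G L : ℝ)
    (hG : ∀ x ∈ Set.Icc (0 : ℝ) Δ, |g x| ≤ G)
    (hL : ∀ x ∈ Set.Icc (0 : ℝ) Δ, ∀ x' ∈ Set.Icc (0 : ℝ) Δ, |g x - g x'| ≤ L * |x - x'|) :
    (1 - v / ε ^ 2 ≤ (ℙ {ω | t ≤ Z ω}).toReal ∧ 0 < (ℙ {ω | t ≤ Z ω}).toReal)
    ∧ |(∫ ω in {ω | 0 ≤ Z ω - t ∧ Z ω - t ≤ Δ - ε}, g (Z ω - t))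
          / (ℙ {ω | t ≤ Z ω}).toReal - g (Δ - t)|
        ≤ 2 * G * (v / ε ^ 2) / (1 - v / ε ^ 2) + L * ε := by
  simp only [← measureReal_def]
  have hZ : MemLp Z 2 ℙ := (memLp_two_iff_integrable_sq hZmeas.aestronglyMeasurable).2 hZsq
  have hq0 : 0 ≤ v / ε ^ 2 := by rw [hv]; positivity [variance_nonneg Z ℙ]
  have hq1 : v / ε ^ 2 < 1 := (div_lt_one (by positivity)).2 hvε
  have hbad : (ℙ : Measure Ω).real {ω | ε ≤ |Z ω - Δ|} ≤ v / ε ^ 2 := by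
    rw [hΔ, hv]; exact measureReal_abs_sub_ge_le_variance_div_sq hZ hε
  have hp : 1 - v / ε ^ 2 ≤ (ℙ : Measure Ω).real {ω | t ≤ Z ω} := by
    rw [hv]; exact one_sub_variance_div_sq_le_measureReal hZ hε (hΔ ▸ ht2)
  have hG0 : 0 ≤ G := (abs_nonneg _).trans (hG (Δ - t) ⟨by linarith, by linarith⟩)
  refine ⟨⟨hp, by linarith⟩, abs_div_sub_le_of_abs_sub_mul_le hq0 hq1 hp (by positivity) ?_⟩
  exact (abs_setIntegral_window_sub_le hZmeas hgmeas hG hL hε ht1 ht2).trans (by gcongr)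

/-- appendix window estimate:
`|𝔼[g(Z-t)·1{0 ≤ Z-t ≤ Δ-ε}]/ℙ(Z ≥ t) - g(Δ-t)| ≤ 2G(v/ε²)/(1-v/ε²) + Lε`. -/
theorem window_estimate
    {Ω : Type*} [MeasureSpace Ω] [IsProbabilityMeasure (ℙ : Measure Ω)]
    (Z : Ω → ℝ) (hZmeas : Measurable Z)
    (hZnn : ∀ᵐ ω ∂ℙ, 0 ≤ Z ω)
    (hZint : Integrable Z) (hZsq : Integrable (fun ω => (Z ω) ^ 2))
    (Δ v : ℝ) (hΔ : Δ = ∫ ω, Z ω) (hΔpos : 0 < Δ)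
    (hv : v = variance Z ℙ) (hvpos : 0 < v)
    (ε t : ℝ) (hε : 0 < ε) (hvε : v < ε ^ 2) (ht1 : 2 * ε ≤ t) (ht2 : t ≤ Δ - ε)
    (g : ℝ → ℝ) (hgmeas : Measurable g)
    (G L : ℝ)
    (hG : ∀ x ∈ Set.Icc (0 : ℝ) Δ, |g x| ≤ G)
    (hL : ∀ x ∈ Set.Icc (0 : ℝ) Δ, ∀ x' ∈ Set.Icc (0 : ℝ) Δ, |g x - g x'| ≤ L * |x - x'|) :
    (1 - v / ε ^ 2 ≤ (ℙ {ω | t ≤ Z ω}).toReal ∧ 0 < (ℙ {ω | t ≤ Z ω}).toReal)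
    ∧ |(∫ ω in {ω | 0 ≤ Z ω - t ∧ Z ω - t ≤ Δ - ε}, g (Z ω - t))
          / (ℙ {ω | t ≤ Z ω}).toReal - g (Δ - t)|
        ≤ 2 * G * (v / ε ^ 2) / (1 - v / ε ^ 2) + L * ε :=
  window_estimate_general Z hZmeas hZsq Δ v hΔ hv ε t hε hvε ht1 ht2 g hgmeas G L hG hL
end
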